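/- For a c-regular one-dimensional set Ω̃_j = ⋃_{l=1}^{n} I_l (finitely many closed intervals of length ≥ c separated by gaps ≥ c), every function g ∈ H^m(Ω̃_j) admits an extension g^e ∈ H^m(ℝ) with ‖g^e‖_{L²(ℝ)} ≤ c₃‖g‖_{L²(Ω̃_j)} and ‖g^e‖_{H^m(ℝ)} ≤ c₄‖g‖_{H^m(Ω̃_j)}, where c₃, c₄ depend only on c and m (not on n or g). -/

import Mathlib

open MeasureTheory ENNReal

/-- A subset of `ℝ` is `c`-regular if it is a finite union of closed intervals,
each of length at least `c`, with consecutive gaps at least `c`. -/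
def CRegular1D (c : ℝ) (s : Set ℝ) : Prop :=
  ∃ (n : ℕ) (a b : Fin (n + 1) → ℝ),
    (∀ l, a l + c ≤ b l) ∧
    (∀ l : Fin n, b l.castSucc + c ≤ a l.succ) ∧
    s = ⋃ l, Set.Icc (a l) (b l)

/-- Sobolev `H^m` norm of `g : ℝ → ℝ` over `s`:
`(∑_{k ≤ m} ‖g^{(k)}‖²_{L²(s)})^{1/2}`. -/
noncomputable def HmN (m : ℕ) (s : Set ℝ) (g : ℝ → ℝ) : ℝ≥0∞ :=
  (∑ k ∈ Finset.range (m + 1),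
    (eLpNorm (iteratedDeriv k g) 2 (volume.restrict s)) ^ 2) ^ ((1 : ℝ) / 2)

/-!
Each interval `[a, b]` of a `c`-regular set is extended on its own. Across an endpoint `p`, `g` is
continued by the higher-order reflection `y ↦ ∑ᵢ wᵢ g(p - (i + 1)(y - p))`, `i = 0, …, m`, whose
weights solve the Vandermonde system `∑ᵢ wᵢ (-(i + 1))ᵏ = 1`, `k ≤ m`; this makes all one-sided
derivatives of order `≤ m` agree at `p`, so the glued function is `C^m`. Multiplying by smooth
cutoffs that equal `1` on `[a, b]` and vanish at distance `δ = c / (4 (m + 1))` gives an extension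
supported in the `c / 3`-enlargement of `[a, b]`. On each flap its `k`-th derivative is bounded
pointwise, by the Leibniz rule, by derivatives of `g` at the reflected points, and since the maps
`y ↦ p - (i + 1)(y - p)` expand lengths, their `L²` norms on the flap are at most those on `[a, b]`.
The enlarged intervals are pairwise disjoint, so the sum of the extensions extends `g` and the
squared norms add up over the intervals.
-/

open Set Filter Topology Function NNReal

section IteratedDeriv

variable {𝕜 : Type*} [NontriviallyNormedField 𝕜] {F : Type*} [NormedAddCommGroup F]
  [NormedSpace 𝕜 F] {n : ℕ} {f : 𝕜 → F} {s t : Set 𝕜} {x : 𝕜}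

theorem iteratedDerivWithin_congr_set (h : s =ᶠ[𝓝 x] t) :
    iteratedDerivWithin n f s x = iteratedDerivWithin n f t x := by
  simp only [iteratedDerivWithin_eq_iteratedFDerivWithin, iteratedFDerivWithin_congr_set h]

theorem iteratedDerivWithin_of_mem_nhds (h : s ∈ 𝓝 x) :
    iteratedDerivWithin n f s x = iteratedDeriv n f x := by
  rw [iteratedDerivWithin_congr_set (eventuallyEq_univ.2 h), iteratedDerivWithin_univ]

theorem support_iteratedDeriv_subset (n : ℕ) (f : 𝕜 → F) :
    support (iteratedDeriv n f) ⊆ tsupport f := fun x hx ↦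
  support_iteratedFDeriv_subset (𝕜 := 𝕜) n fun h ↦ hx (by simp [iteratedDeriv, h])

theorem iteratedDerivWithin_comp_mul_add (hs : UniqueDiffOn 𝕜 s) (ht : UniqueDiffOn 𝕜 t)
    {r q : 𝕜} (hst : MapsTo (fun y ↦ r * y + q) s t) (hf : ContDiffOn 𝕜 n f t) (hx : x ∈ s) :
    iteratedDerivWithin n (fun y ↦ f (r * y + q)) s x
      = r ^ n • iteratedDerivWithin n f t (r * x + q) := by
  induction n generalizing x with
  | zero => simp
  | succ n ih =>
    have h₀ : EqOn (iteratedDerivWithin n (fun y ↦ f (r * y + q)) s)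
        (fun y ↦ r ^ n • iteratedDerivWithin n f t (r * y + q)) s := fun y hy ↦ ih hf.of_succ hy
    have h₁ : DifferentiableWithinAt 𝕜 (iteratedDerivWithin n f t) t (r * x + q) :=
      hf.differentiableOn_iteratedDerivWithin (Nat.cast_lt.mpr n.lt_succ_self) ht _ (hst hx)
    have h₂ : HasDerivWithinAt (fun y ↦ r * y + q) r s x := by
      simpa using ((hasDerivAt_id x).const_mul r |>.add_const q).hasDerivWithinAt
    have h₃ : HasDerivWithinAt (fun y ↦ r ^ n • iteratedDerivWithin n f t (r * y + q))
        (r ^ n • r • derivWithin (iteratedDerivWithin n f t) t (r * x + q)) s x :=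
      (h₁.hasDerivWithinAt.scomp x h₂ hst).const_smul (r ^ n)
    rw [iteratedDerivWithin_succ, derivWithin_congr h₀ (ih hf.of_succ hx), h₃.derivWithin (hs x hx),
      iteratedDerivWithin_succ, smul_smul, pow_succ]

end IteratedDeriv

theorem norm_iteratedDerivWithin_mul_le_of_bound {n : ℕ} {f h : ℝ → ℝ} {s : Set ℝ} {x M : ℝ}
    (hs : UniqueDiffOn ℝ s) (hx : x ∈ s) (hf : ContDiffOn ℝ n f s) (hh : ContDiffOn ℝ n h s)
    (hM : ∀ j ≤ n, ‖iteratedDerivWithin j f s x‖ ≤ M) :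
    ‖iteratedDerivWithin n (f * h) s x‖
      ≤ 2 ^ n * M * ∑ j ∈ Finset.range (n + 1), ‖iteratedDerivWithin j h s x‖ := by
  rw [iteratedDerivWithin_mul hx hs (hf x hx) (hh x hx), Finset.mul_sum,
    ← Finset.sum_range_reflect]
  refine (norm_sum_le _ _).trans (Finset.sum_le_sum fun j hj ↦ ?_)
  have hj : j ≤ n := Nat.lt_succ_iff.1 (Finset.mem_range.1 hj)
  rw [Nat.add_sub_cancel, norm_mul, norm_mul, Nat.sub_sub_self hj]
  have hchoose : ‖(n.choose (n - j) : ℝ)‖ ≤ 2 ^ n := by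
    rw [Real.norm_natCast]; exact_mod_cast Nat.choose_le_two_pow n (n - j)
  exact mul_le_mul_of_nonneg_right (mul_le_mul hchoose (hM _ (Nat.sub_le n j)) (norm_nonneg _)
    (by positivity)) (norm_nonneg _)

theorem ContDiffOn.Icc_union_Icc {F : Type*} [NormedAddCommGroup F] [NormedSpace ℝ F]
    {u t v : ℝ} (hut : u < t) (htv : t < v) {n : ℕ} {f : ℝ → F}
    (h₁ : ContDiffOn ℝ n f (Icc u t)) (h₂ : ContDiffOn ℝ n f (Icc t v))
    (hmatch : ∀ k ≤ n, iteratedDerivWithin k f (Icc u t) t = iteratedDerivWithin k f (Icc t v) t) :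
    ContDiffOn ℝ n f (Icc u v) := by
  induction n generalizing f with
  | zero =>
    simp only [CharP.cast_eq_zero, contDiffOn_zero] at h₁ h₂ ⊢
    rw [← Icc_union_Icc_eq_Icc hut.le htv.le]
    exact h₁.union_of_isClosed h₂ isClosed_Icc isClosed_Icc
  | succ n ih =>
    rw [Nat.cast_succ] at h₁ h₂
    have hd₁ := (contDiffOn_succ_iff_derivWithin (uniqueDiffOn_Icc hut)).1 h₁
    have hd₂ := (contDiffOn_succ_iff_derivWithin (uniqueDiffOn_Icc htv)).1 h₂
    have hmatch₁ : derivWithin f (Icc u t) t = derivWithin f (Icc t v) t := by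
      simpa using hmatch 1 (by omega)
    have hasDeriv : ∀ x ∈ Icc u v, HasDerivWithinAt f
        (if x ≤ t then derivWithin f (Icc u t) x else derivWithin f (Icc t v) x) (Icc u v) x := by
      intro x hx
      rw [← Icc_union_Icc_eq_Icc hut.le htv.le]
      refine HasDerivWithinAt.union ?_ ?_
      · by_cases hxt : x ≤ t
        · rw [if_pos hxt]
          exact (hd₁.1 x ⟨hx.1, hxt⟩).hasDerivWithinAt
        · exact hasDerivWithinAt_iff_hasFDerivWithinAt.2
            (.of_notMem_closure (by rw [closure_Icc]; exact fun h ↦ hxt h.2))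
      · by_cases hxt : t ≤ x
        · split_ifs with h
          · obtain rfl := le_antisymm h hxt
            rw [hmatch₁]
            exact (hd₂.1 x ⟨hxt, hx.2⟩).hasDerivWithinAt
          · exact (hd₂.1 x ⟨hxt, hx.2⟩).hasDerivWithinAt
        · exact hasDerivWithinAt_iff_hasFDerivWithinAt.2
            (.of_notMem_closure (by rw [closure_Icc]; exact fun h ↦ hxt h.1))
    have hderiv : ∀ x ∈ Icc u v, derivWithin f (Icc u v) x
        = if x ≤ t then derivWithin f (Icc u t) x else derivWithin f (Icc t v) x :=
      fun x hx ↦ (hasDeriv x hx).derivWithin ((uniqueDiffOn_Icc (hut.trans htv)) x hx)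
    have e₁ : EqOn (derivWithin f (Icc u v)) (derivWithin f (Icc u t)) (Icc u t) := fun x hx ↦ by
      rw [hderiv x ⟨hx.1, hx.2.trans htv.le⟩, if_pos hx.2]
    have e₂ : EqOn (derivWithin f (Icc u v)) (derivWithin f (Icc t v)) (Icc t v) := fun x hx ↦ by
      rw [hderiv x ⟨hut.le.trans hx.1, hx.2⟩]
      split_ifs with h
      · rw [le_antisymm h hx.1, hmatch₁]
      · rfl
    rw [Nat.cast_succ, contDiffOn_succ_iff_derivWithin (uniqueDiffOn_Icc (hut.trans htv))]
    refine ⟨fun x hx ↦ (hasDeriv x hx).differentiableWithinAt, by simp, ?_⟩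
    refine ih (hd₁.2.2.congr e₁) (hd₂.2.2.congr e₂) fun k hk ↦ ?_
    rw [iteratedDerivWithin_congr e₁ ⟨hut.le, le_rfl⟩,
      iteratedDerivWithin_congr e₂ ⟨le_rfl, htv.le⟩,
      ← iteratedDerivWithin_succ', ← iteratedDerivWithin_succ']
    exact hmatch (k + 1) (by omega)

theorem contDiff_of_contDiffOn_of_support_subset {𝕜 : Type*} [NontriviallyNormedField 𝕜]
    {F : Type*} [NormedAddCommGroup F] [NormedSpace 𝕜 F] {n : WithTop ℕ∞} {f : 𝕜 → F}
    {U K : Set 𝕜} (hU : IsOpen U) (hK : IsClosed K) (hKU : K ⊆ U) (hf : ContDiffOn 𝕜 n f U)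
    (hsupp : support f ⊆ K) : ContDiff 𝕜 n f := by
  refine contDiff_iff_contDiffAt.2 fun x ↦ ?_
  by_cases hx : x ∈ U
  · exact hf.contDiffAt (hU.mem_nhds hx)
  · have : f =ᶠ[𝓝 x] fun _ ↦ 0 := by
      filter_upwards [hK.isOpen_compl.mem_nhds fun h ↦ hx (hKU h)] with y hy
      exact notMem_support.1 fun h ↦ hy (hsupp h)
    exact contDiffAt_const.congr_of_eventuallyEq this

theorem Real.smoothTransition.exists_bound_iteratedDeriv (j : ℕ) :
    ∃ M, ∀ x, ‖iteratedDeriv j Real.smoothTransition x‖ ≤ M := by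
  cases j with
  | zero =>
    refine ⟨1, fun x ↦ ?_⟩
    rw [iteratedDeriv_zero, Real.norm_eq_abs, abs_le]
    exact ⟨by linarith [Real.smoothTransition.nonneg x], Real.smoothTransition.le_one x⟩
  | succ j =>
    have hderiv : HasCompactSupport (deriv Real.smoothTransition) := by
      refine HasCompactSupport.intro (isCompact_Icc (a := 0) (b := 1)) fun x hx ↦ ?_
      rcases not_and_or.1 hx with h | h
      · have : Real.smoothTransition =ᶠ[𝓝 x] fun _ ↦ 0 := by
          filter_upwards [Iio_mem_nhds (not_le.1 h)] with y hy
          exact Real.smoothTransition.zero_of_nonpos hy.le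
        simp [this.deriv_eq]
      · have : Real.smoothTransition =ᶠ[𝓝 x] fun _ ↦ 1 := by
          filter_upwards [Ioi_mem_nhds (not_le.1 h)] with y hy
          exact Real.smoothTransition.one_of_one_le (le_of_lt hy)
        simp [this.deriv_eq]
    refine (Real.smoothTransition.contDiff (n := ⊤).continuous_iteratedDeriv (j + 1)
      (by exact_mod_cast le_top)).bounded_above_of_compact_support (hderiv.mono' ?_)
    rw [iteratedDeriv_succ']
    exact support_iteratedDeriv_subset j _

section SquaredL2Norm

variable {α E : Type*} [MeasurableSpace α] {μ : Measure α} [NormedAddCommGroup E]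

theorem eLpNorm_two_sq_eq_lintegral (f : α → E) :
    eLpNorm f 2 μ ^ 2 = ∫⁻ x, ‖f x‖ₑ ^ 2 ∂μ := by
  simpa using eLpNorm_nnreal_pow_eq_lintegral (f := f) (μ := μ) (p := 2) two_ne_zero

theorem eLpNorm_two_sq_restrict_union_le (f : α → E) (A B : Set α) :
    eLpNorm f 2 (μ.restrict (A ∪ B)) ^ 2
      ≤ eLpNorm f 2 (μ.restrict A) ^ 2 + eLpNorm f 2 (μ.restrict B) ^ 2 := by
  simp only [eLpNorm_two_sq_eq_lintegral]
  exact lintegral_union_le _ _ _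

theorem eLpNorm_two_sq_restrict_iUnion {ι : Type*} [Fintype ι] {A : ι → Set α}
    (hA : ∀ i, MeasurableSet (A i)) (hd : Pairwise (Disjoint on A)) (f : α → E) :
    eLpNorm f 2 (μ.restrict (⋃ i, A i)) ^ 2 = ∑ i, eLpNorm f 2 (μ.restrict (A i)) ^ 2 := by
  simp only [eLpNorm_two_sq_eq_lintegral, lintegral_iUnion hA hd, tsum_fintype]

theorem eLpNorm_two_sq_sum_of_pairwise_disjoint_support {ι : Type*} [Fintype ι]
    {f : ι → α → E} (hf : ∀ i, AEStronglyMeasurable (f i) μ)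
    (hd : Pairwise (Disjoint on fun i ↦ support (f i))) :
    eLpNorm (∑ i, f i) 2 μ ^ 2 = ∑ i, eLpNorm (f i) 2 μ ^ 2 := by
  simp only [eLpNorm_two_sq_eq_lintegral]
  rw [← lintegral_finsetSum' _ fun i _ ↦ (hf i).enorm.pow_const 2]
  refine lintegral_congr fun x ↦ ?_
  rw [Finset.sum_apply]
  by_cases h : ∃ i, x ∈ support (f i)
  · obtain ⟨i, hi⟩ := h
    have hzero : ∀ j, j ≠ i → f j x = 0 := fun j hj ↦
      notMem_support.1 fun hj' ↦ Set.disjoint_left.1 (hd hj) hj' hi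
    rw [Finset.sum_eq_single i (fun j _ hj ↦ hzero j hj) (by simp),
      Finset.sum_eq_single i (fun j _ hj ↦ by simp [hzero j hj]) (by simp)]
  · simp [notMem_support.1 (not_exists.1 h _)]

end SquaredL2Norm

theorem eLpNorm_comp_mul_add_le {E : Type*} [NormedAddCommGroup E] (f : ℝ → E) (p : ℝ≥0∞)
    {r q : ℝ} (hr : 1 ≤ |r|) {s t : Set ℝ} (ht : MeasurableSet t)
    (hst : MapsTo (fun x ↦ r * x + q) s t) :
    eLpNorm (fun x ↦ f (r * x + q)) p (volume.restrict s) ≤ eLpNorm f p (volume.restrict t) := by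
  have hr₀ : r ≠ 0 := by rintro rfl; norm_num at hr
  set φ : ℝ → ℝ := fun x ↦ r * x + q
  have hφ : MeasurableEmbedding φ := (affineHomeomorph r q hr₀).measurableEmbedding
  have hmap : Measure.map φ volume = ENNReal.ofReal |r⁻¹| • volume := by
    rw [show φ = (· + q) ∘ (r * ·) from rfl,
      ← Measure.map_map (measurable_add_const q) (measurable_const_mul r),
      Real.map_volume_mul_left hr₀, Measure.map_smul, map_add_right_eq_self]
  have hjac : ENNReal.ofReal |r⁻¹| ≤ 1 := by
    rw [ENNReal.ofReal_le_one, abs_inv]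
    exact inv_le_one_of_one_le₀ hr
  calc eLpNorm (fun x ↦ f (φ x)) p (volume.restrict s)
      = eLpNorm f p (Measure.map φ (volume.restrict s)) := hφ.eLpNorm_map_measure.symm
    _ ≤ eLpNorm f p (Measure.map φ (volume.restrict (φ ⁻¹' t))) :=
      eLpNorm_mono_measure _ (Measure.map_mono (Measure.restrict_mono hst le_rfl) hφ.measurable)
    _ = eLpNorm f p (ENNReal.ofReal |r⁻¹| • volume.restrict t) := by
      rw [← Measure.restrict_map hφ.measurable ht, hmap, Measure.restrict_smul]
    _ ≤ eLpNorm f p (volume.restrict t) :=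
      eLpNorm_mono_measure _ (Measure.le_iff'.2 fun A ↦ by
        rw [Measure.smul_apply, smul_eq_mul]
        exact mul_le_of_le_one_left' hjac)

theorem ENNReal.sq_sum_le_card_mul_sum_sq {ι : Type*} (s : Finset ι) (f : ι → ℝ≥0∞) :
    (∑ i ∈ s, f i) ^ 2 ≤ s.card * ∑ i ∈ s, f i ^ 2 := by
  have := ENNReal.rpow_sum_le_const_mul_sum_rpow s f one_le_two
  norm_num [ENNReal.rpow_two] at this
  exact this

theorem ENNReal.le_rpow_half_mul_of_sq_le {x y C : ℝ≥0∞} (h : x ^ 2 ≤ C * y ^ 2) :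
    x ≤ C ^ (1 / 2 : ℝ) * y := by
  have := ENNReal.rpow_le_rpow h (by norm_num : (0 : ℝ) ≤ 1 / 2)
  rwa [ENNReal.mul_rpow_of_nonneg _ _ (by norm_num), ← ENNReal.rpow_natCast,
    ← ENNReal.rpow_natCast, ← ENNReal.rpow_mul, ← ENNReal.rpow_mul, Nat.cast_ofNat,
    mul_one_div_cancel two_ne_zero, ENNReal.rpow_one, ENNReal.rpow_one] at this

noncomputable def sobolevSq (k : ℕ) (μ : Measure ℝ) (f : ℝ → ℝ) : ℝ≥0∞ :=
  ∑ j ∈ Finset.range (k + 1), eLpNorm (iteratedDeriv j f) 2 μ ^ 2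

theorem sobolevSq_mono_left {k l : ℕ} (hkl : k ≤ l) (μ : Measure ℝ) (f : ℝ → ℝ) :
    sobolevSq k μ f ≤ sobolevSq l μ f :=
  Finset.sum_le_sum_of_subset (Finset.range_subset_range.2 (by omega))

theorem sobolevSq_restrict_iUnion {ι : Type*} [Fintype ι] {A : ι → Set ℝ}
    (hA : ∀ i, MeasurableSet (A i)) (hd : Pairwise (Disjoint on A)) (k : ℕ) (f : ℝ → ℝ) :
    sobolevSq k (volume.restrict (⋃ i, A i)) f = ∑ i, sobolevSq k (volume.restrict (A i)) f := by
  simp only [sobolevSq, eLpNorm_two_sq_restrict_iUnion hA hd]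
  exact Finset.sum_comm

theorem sobolevSq_le_mul_of_forall_le {m : ℕ} {μ ν : Measure ℝ} {f g : ℝ → ℝ} {C : ℝ≥0∞}
    (h : ∀ k ≤ m, eLpNorm (iteratedDeriv k f) 2 μ ^ 2 ≤ C * sobolevSq k ν g) :
    sobolevSq m μ f ≤ (m + 1) * C * sobolevSq m ν g :=
  calc sobolevSq m μ f ≤ ∑ _k ∈ Finset.range (m + 1), C * sobolevSq m ν g :=
        Finset.sum_le_sum fun k hk ↦ (h k (Finset.mem_range_succ_iff.1 hk)).trans
          (by gcongr; exact sobolevSq_mono_left (Finset.mem_range_succ_iff.1 hk) _ _)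
    _ = (m + 1) * C * sobolevSq m ν g := by
        rw [Finset.sum_const, Finset.card_range, nsmul_eq_mul, mul_assoc]; push_cast; rfl

theorem HmN_sq (m : ℕ) (s : Set ℝ) (g : ℝ → ℝ) :
    HmN m s g ^ 2 = sobolevSq m (volume.restrict s) g := by
  rw [HmN, ← ENNReal.rpow_natCast, ← ENNReal.rpow_mul]
  norm_num [sobolevSq]

theorem eLpNorm_iteratedDerivWithin_Icc (f : ℝ → ℝ) (n : ℕ) (p : ℝ≥0∞) (a b : ℝ) :
    eLpNorm (iteratedDerivWithin n f (Icc a b)) p (volume.restrict (Icc a b))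
      = eLpNorm (iteratedDeriv n f) p (volume.restrict (Icc a b)) := by
  refine eLpNorm_congr_ae ?_
  rw [Measure.restrict_congr_set Ioo_ae_eq_Icc.symm]
  exact ae_restrict_of_forall_mem measurableSet_Ioo fun x hx ↦
    iteratedDerivWithin_of_mem_nhds (Icc_mem_nhds hx.1 hx.2)

theorem eLpNorm_iteratedDeriv_restrict_congr {f g : ℝ → ℝ} {V : Set ℝ} (hV : IsOpen V)
    (h : EqOn f g V) (k : ℕ) (p : ℝ≥0∞) (μ : Measure ℝ) :
    eLpNorm (iteratedDeriv k f) p (μ.restrict V) = eLpNorm (iteratedDeriv k g) p (μ.restrict V) :=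
  eLpNorm_congr_ae (ae_restrict_of_forall_mem hV.measurableSet (h.iteratedDeriv_of_isOpen hV k))

theorem eLpNorm_iteratedDeriv_restrict_Icc_congr {f g : ℝ → ℝ} {a b : ℝ} (h : EqOn f g (Icc a b))
    (k : ℕ) (p : ℝ≥0∞) : eLpNorm (iteratedDeriv k f) p (volume.restrict (Icc a b))
      = eLpNorm (iteratedDeriv k g) p (volume.restrict (Icc a b)) := by
  rw [← eLpNorm_iteratedDerivWithin_Icc f, ← eLpNorm_iteratedDerivWithin_Icc g]
  exact eLpNorm_congr_ae (ae_restrict_of_forall_mem measurableSet_Icc (iteratedDerivWithin_congr h))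

theorem exists_sum_mul_pow_eq_one {K : Type*} [Field K] {m : ℕ} {v : Fin (m + 1) → K}
    (hv : Injective v) : ∃ w : Fin (m + 1) → K, ∀ k ≤ m, ∑ i, w i * v i ^ k = 1 := by
  set A := Matrix.vandermonde v
  have hA : IsUnit A.det := isUnit_iff_ne_zero.2 (Matrix.det_vandermonde_ne_zero_iff.2 hv)
  refine ⟨Matrix.vecMul (fun _ ↦ 1) A⁻¹, fun k hk ↦ ?_⟩
  have h : Matrix.vecMul (Matrix.vecMul (fun _ ↦ 1) A⁻¹) A = fun _ ↦ 1 := by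
    rw [Matrix.vecMul_vecMul, Matrix.nonsing_inv_mul _ hA, Matrix.vecMul_one]
  simpa [Matrix.vecMul, dotProduct, A, Matrix.vandermonde] using
    congrFun h ⟨k, Nat.lt_succ_of_le hk⟩

-- `r i * y + (1 - r i) * p = p + r i * (y - p)` is the dilation about `p` with ratio `r i`.
def higherReflection {ι : Type*} [Fintype ι] (w r : ι → ℝ) (p : ℝ) (g : ℝ → ℝ) : ℝ → ℝ :=
  fun y ↦ ∑ i, w i * g (r i * y + (1 - r i) * p)

section HigherReflection

variable {ι : Type*} [Fintype ι] {w r : ι → ℝ} {p : ℝ} {g : ℝ → ℝ} {n : ℕ} {s t : Set ℝ}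

theorem contDiffOn_higherReflection (hg : ContDiffOn ℝ n g t)
    (hst : ∀ i, MapsTo (fun y ↦ r i * y + (1 - r i) * p) s t) :
    ContDiffOn ℝ n (higherReflection w r p g) s :=
  ContDiffOn.sum fun i _ ↦ contDiffOn_const.mul (hg.comp (by fun_prop) (hst i))

theorem iteratedDerivWithin_higherReflection (hs : UniqueDiffOn ℝ s) (ht : UniqueDiffOn ℝ t)
    (hg : ContDiffOn ℝ n g t) (hst : ∀ i, MapsTo (fun y ↦ r i * y + (1 - r i) * p) s t)
    {x : ℝ} (hx : x ∈ s) :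
    iteratedDerivWithin n (higherReflection w r p g) s x
      = ∑ i, w i * r i ^ n * iteratedDerivWithin n g t (r i * x + (1 - r i) * p) := by
  have hcomp : ∀ i, ContDiffOn ℝ n (fun y ↦ g (r i * y + (1 - r i) * p)) s := fun i ↦
    hg.comp (by fun_prop) (hst i)
  unfold higherReflection
  rw [iteratedDerivWithin_fun_sum hx hs
    fun i _ ↦ (contDiffOn_const.mul (hcomp i)) x hx]
  refine Finset.sum_congr rfl fun i _ ↦ ?_
  rw [iteratedDerivWithin_const_mul hx hs _ (hcomp i x hx),
    iteratedDerivWithin_comp_mul_add hs ht (hst i) hg hx, smul_eq_mul, mul_assoc]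

theorem iteratedDerivWithin_higherReflection_self (hs : UniqueDiffOn ℝ s)
    (ht : UniqueDiffOn ℝ t) (hg : ContDiffOn ℝ n g t)
    (hst : ∀ i, MapsTo (fun y ↦ r i * y + (1 - r i) * p) s t) (hp : p ∈ s)
    (hw : ∑ i, w i * r i ^ n = 1) :
    iteratedDerivWithin n (higherReflection w r p g) s p = iteratedDerivWithin n g t p := by
  rw [iteratedDerivWithin_higherReflection hs ht hg hst hp]
  simp_rw [show ∀ i, r i * p + (1 - r i) * p = p from fun i ↦ by ring]
  rw [← Finset.sum_mul, hw, one_mul]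

variable {ψ : ℝ → ℝ} {V : Set ℝ} {M B : ℝ}

theorem norm_iteratedDeriv_mul_higherReflection_le (hV : IsOpen V) (ht : UniqueDiffOn ℝ t)
    (hg : ContDiffOn ℝ n g t) (hVt : ∀ i, MapsTo (fun y ↦ r i * y + (1 - r i) * p) V t)
    (hψ : ContDiff ℝ n ψ) (hψM : ∀ j ≤ n, ∀ x, ‖iteratedDeriv j ψ x‖ ≤ M)
    (hB : ∀ i, ∀ j ≤ n, ‖w i * r i ^ j‖ ≤ B) {x : ℝ} (hx : x ∈ V) :
    ‖iteratedDeriv n (ψ * higherReflection w r p g) x‖ ≤ 2 ^ n * M * B *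
      ∑ j ∈ Finset.range (n + 1), ∑ i, ‖iteratedDerivWithin j g t (r i * x + (1 - r i) * p)‖ := by
  rw [← iteratedDerivWithin_of_isOpen hV hx]
  refine (norm_iteratedDerivWithin_mul_le_of_bound (M := M) hV.uniqueDiffOn hx hψ.contDiffOn
    (contDiffOn_higherReflection hg hVt) fun j hj ↦ ?_).trans ?_
  · rw [iteratedDerivWithin_of_isOpen hV hx]
    exact hψM j hj x
  have hM : 0 ≤ M := (norm_nonneg _).trans (hψM 0 (Nat.zero_le n) x)
  rw [mul_assoc _ B]
  refine mul_le_mul_of_nonneg_left ?_ (by positivity)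
  rw [Finset.mul_sum]
  refine Finset.sum_le_sum fun j hj ↦ ?_
  have hjn : j ≤ n := Nat.lt_succ_iff.1 (Finset.mem_range.1 hj)
  rw [iteratedDerivWithin_higherReflection hV.uniqueDiffOn ht (hg.of_le (by exact_mod_cast hjn))
    hVt hx, Finset.mul_sum]
  refine (norm_sum_le _ _).trans (Finset.sum_le_sum fun i _ ↦ ?_)
  rw [norm_mul]
  exact mul_le_mul_of_nonneg_right (hB i j hjn) (norm_nonneg _)

theorem eLpNorm_iteratedDeriv_mul_higherReflection_le (hV : IsOpen V) (ht : UniqueDiffOn ℝ t)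
    (htm : MeasurableSet t) (hg : ContDiffOn ℝ n g t) (hr : ∀ i, 1 ≤ |r i|)
    (hVt : ∀ i, MapsTo (fun y ↦ r i * y + (1 - r i) * p) V t)
    (hψ : ContDiff ℝ n ψ) (hψM : ∀ j ≤ n, ∀ x, ‖iteratedDeriv j ψ x‖ ≤ M)
    (hB : ∀ i, ∀ j ≤ n, ‖w i * r i ^ j‖ ≤ B) :
    eLpNorm (iteratedDeriv n (ψ * higherReflection w r p g)) 2 (volume.restrict V)
      ≤ ENNReal.ofReal (2 ^ n * M * B) * Fintype.card ι *
        ∑ j ∈ Finset.range (n + 1), eLpNorm (iteratedDerivWithin j g t) 2 (volume.restrict t) := by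
  set G : ℕ → ι → ℝ → ℝ := fun j i x ↦ iteratedDerivWithin j g t (r i * x + (1 - r i) * p)
  have hG : ∀ j ∈ Finset.range (n + 1), ∀ i, AEStronglyMeasurable (G j i) (volume.restrict V) := by
    intro j hj i
    have hjn : j ≤ n := Nat.lt_succ_iff.1 (Finset.mem_range.1 hj)
    exact ((hg.continuousOn_iteratedDerivWithin (by exact_mod_cast hjn) ht).comp
      (by fun_prop : Continuous fun y ↦ r i * y + (1 - r i) * p).continuousOn
      (hVt i)).aestronglyMeasurable hV.measurableSet
  calc eLpNorm (iteratedDeriv n (ψ * higherReflection w r p g)) 2 (volume.restrict V)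
      ≤ ENNReal.ofReal (2 ^ n * M * B) *
          eLpNorm (∑ j ∈ Finset.range (n + 1), ∑ i, fun x ↦ ‖G j i x‖) 2 (volume.restrict V) := by
        refine eLpNorm_le_mul_eLpNorm_of_ae_le_mul
          (ae_restrict_of_forall_mem hV.measurableSet fun x hx ↦ ?_) 2
        rw [Finset.sum_apply, Real.norm_of_nonneg (Finset.sum_nonneg fun j _ ↦ ?_)]
        · simpa [Finset.sum_apply] using
            norm_iteratedDeriv_mul_higherReflection_le hV ht hg hVt hψ hψM hB hx
        · rw [Finset.sum_apply]
          exact Finset.sum_nonneg fun i _ ↦ norm_nonneg _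
    _ ≤ ENNReal.ofReal (2 ^ n * M * B) *
          ∑ j ∈ Finset.range (n + 1), ∑ i, eLpNorm (G j i) 2 (volume.restrict V) := by
        gcongr
        refine (eLpNorm_sum_le (fun j hj ↦ Finset.aestronglyMeasurable_sum _
          fun i _ ↦ (hG j hj i).norm) one_le_two).trans (Finset.sum_le_sum fun j hj ↦ ?_)
        refine (eLpNorm_sum_le (fun i _ ↦ (hG j hj i).norm) one_le_two).trans_eq ?_
        simp only [eLpNorm_norm]
    _ ≤ ENNReal.ofReal (2 ^ n * M * B) * ∑ j ∈ Finset.range (n + 1),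
          ∑ _i : ι, eLpNorm (iteratedDerivWithin j g t) 2 (volume.restrict t) := by
        gcongr with j _ i
        exact eLpNorm_comp_mul_add_le _ 2 (hr i) htm (hVt i)
    _ = _ := by
        simp only [Finset.sum_const, Finset.card_univ, nsmul_eq_mul, ← Finset.mul_sum, mul_assoc]

end HigherReflection

theorem mapsTo_Icc_reflect_left {r h a b : ℝ} (hr : r ≤ 0) (hh : -r * h ≤ b - a) :
    MapsTo (fun y ↦ r * y + (1 - r) * a) (Icc (a - h) a) (Icc a b) := fun y hy ↦ by
  have : -r * (a - y) ≤ -r * h := mul_le_mul_of_nonneg_left (by linarith [hy.1]) (by linarith)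
  constructor <;> nlinarith [hy.2]

theorem mapsTo_Icc_reflect_right {r h a b : ℝ} (hr : r ≤ 0) (hh : -r * h ≤ b - a) :
    MapsTo (fun y ↦ r * y + (1 - r) * b) (Icc b (b + h)) (Icc a b) := fun y hy ↦ by
  have : -r * (y - b) ≤ -r * h := mul_le_mul_of_nonneg_left (by linarith [hy.2]) (by linarith)
  constructor <;> nlinarith [hy.1]

noncomputable def cutoff (σ p : ℝ) : ℝ → ℝ := fun x ↦ Real.smoothTransition (σ * (x - p) + 1)

section Cutoff

variable {σ p x : ℝ}

theorem cutoff_eq_one (h : 0 ≤ σ * (x - p)) : cutoff σ p x = 1 :=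
  Real.smoothTransition.one_of_one_le (by linarith)

theorem cutoff_eq_zero (h : σ * (x - p) ≤ -1) : cutoff σ p x = 0 :=
  Real.smoothTransition.zero_of_nonpos (by linarith)

theorem contDiff_cutoff {n : ℕ} (σ p : ℝ) : ContDiff ℝ n (cutoff σ p) :=
  (Real.smoothTransition.contDiff (n := n)).comp (by fun_prop)

theorem norm_iteratedDeriv_cutoff_le {k : ℕ} {M : ℝ}
    (hM : ∀ j ≤ k, ∀ y, ‖iteratedDeriv j Real.smoothTransition y‖ ≤ M) (σ p : ℝ) {j : ℕ}
    (hj : j ≤ k) (x : ℝ) : ‖iteratedDeriv j (cutoff σ p) x‖ ≤ (1 + |σ|) ^ k * M := by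
  have hT : ContDiff ℝ j Real.smoothTransition := by
    exact_mod_cast Real.smoothTransition.contDiff (n := j)
  have h : cutoff σ p = fun y ↦ Real.smoothTransition (σ * y + (1 - σ * p)) := by
    ext y; simp only [cutoff]; ring_nf
  rw [h, ← iteratedDerivWithin_univ, iteratedDerivWithin_comp_mul_add uniqueDiffOn_univ
    uniqueDiffOn_univ (mapsTo_univ _ _) hT.contDiffOn (mem_univ x), iteratedDerivWithin_univ,
    norm_smul, norm_pow, Real.norm_eq_abs]
  have hM₀ : 0 ≤ M := (norm_nonneg _).trans (hM 0 (Nat.zero_le k) 0)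
  have hσ : 1 ≤ 1 + |σ| := le_add_of_nonneg_right (abs_nonneg σ)
  exact mul_le_mul ((pow_le_pow_left₀ (abs_nonneg σ) (by linarith) j).trans
    (pow_le_pow_right₀ hσ hj)) (hM j hj _) (norm_nonneg _) (by positivity)

end Cutoff

def reflectionNodes (m : ℕ) : Fin (m + 1) → ℝ := fun i ↦ -((i : ℕ) + 1 : ℝ)

theorem reflectionNodes_injective (m : ℕ) : Injective (reflectionNodes m) := fun i j h ↦ by
  simpa [reflectionNodes, Fin.ext_iff] using h

theorem one_le_abs_reflectionNodes {m : ℕ} (i : Fin (m + 1)) : 1 ≤ |reflectionNodes m i| := by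
  rw [reflectionNodes, abs_neg, abs_of_nonneg (by positivity)]
  linarith [(i : ℕ).cast_nonneg (α := ℝ)]

theorem reflectionNodes_mem_Icc {m : ℕ} (i : Fin (m + 1)) :
    reflectionNodes m i ∈ Icc (-(m + 1 : ℝ)) 0 := by
  have : ((i : ℕ) : ℝ) ≤ m := by exact_mod_cast Nat.lt_succ_iff.1 i.2
  constructor <;> simp only [reflectionNodes] <;> linarith [(i : ℕ).cast_nonneg (α := ℝ)]

theorem eLpNorm_iteratedDeriv_cutoff_mul_higherReflection_le {m k : ℕ} {w : Fin (m + 1) → ℝ}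
    {a b σ p M B : ℝ} {g : ℝ → ℝ} {V : Set ℝ} (hab : a < b) (hg : ContDiffOn ℝ k g (Icc a b))
    (hM : ∀ j ≤ k, ∀ y, ‖iteratedDeriv j Real.smoothTransition y‖ ≤ M)
    (hB : ∀ i, ∀ j ≤ k, ‖w i * reflectionNodes m i ^ j‖ ≤ B) (hV : IsOpen V)
    (hVmaps : ∀ i, MapsTo (fun y ↦ reflectionNodes m i * y + (1 - reflectionNodes m i) * p) V
      (Icc a b)) :
    eLpNorm (iteratedDeriv k (cutoff σ p * higherReflection w (reflectionNodes m) p g)) 2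
        (volume.restrict V)
      ≤ ENNReal.ofReal (2 ^ k * ((1 + |σ|) ^ k * M) * B) * (m + 1) *
        ∑ j ∈ Finset.range (k + 1), eLpNorm (iteratedDeriv j g) 2 (volume.restrict (Icc a b)) := by
  refine (eLpNorm_iteratedDeriv_mul_higherReflection_le hV (uniqueDiffOn_Icc hab)
    measurableSet_Icc hg one_le_abs_reflectionNodes hVmaps (contDiff_cutoff σ p)
    (fun j hj ↦ norm_iteratedDeriv_cutoff_le hM σ p hj) hB).trans_eq ?_
  simp [eLpNorm_iteratedDerivWithin_Icc]

noncomputable def extendByReflection (m : ℕ) (w : Fin (m + 1) → ℝ) (a b : ℝ) (g : ℝ → ℝ) :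
    ℝ → ℝ := fun x ↦
  if x < a then higherReflection w (reflectionNodes m) a g x
  else if x ≤ b then g x else higherReflection w (reflectionNodes m) b g x

noncomputable def extendIcc (m : ℕ) (w : Fin (m + 1) → ℝ) (δ a b : ℝ) (g : ℝ → ℝ) : ℝ → ℝ :=
  fun x ↦ cutoff δ⁻¹ a x * cutoff (-δ⁻¹) b x * extendByReflection m w a b g x

section ExtendIcc

variable {m : ℕ} {w : Fin (m + 1) → ℝ} {δ a b : ℝ} {g : ℝ → ℝ}

theorem mapsTo_reflectionNodes_left (hδ : 0 < δ) (hab : 2 * (m + 1) * δ ≤ b - a)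
    (i : Fin (m + 1)) : MapsTo (fun y ↦ reflectionNodes m i * y + (1 - reflectionNodes m i) * a)
      (Icc (a - 2 * δ) a) (Icc a b) :=
  mapsTo_Icc_reflect_left (reflectionNodes_mem_Icc i).2
    (by nlinarith [(reflectionNodes_mem_Icc i).1])

theorem mapsTo_reflectionNodes_right (hδ : 0 < δ) (hab : 2 * (m + 1) * δ ≤ b - a)
    (i : Fin (m + 1)) : MapsTo (fun y ↦ reflectionNodes m i * y + (1 - reflectionNodes m i) * b)
      (Icc b (b + 2 * δ)) (Icc a b) :=
  mapsTo_Icc_reflect_right (reflectionNodes_mem_Icc i).2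
    (by nlinarith [(reflectionNodes_mem_Icc i).1])

theorem extendByReflection_eqOn : EqOn (extendByReflection m w a b g) g (Icc a b) :=
  fun x hx ↦ by simp [extendByReflection, not_lt.2 hx.1, hx.2]

section Glue

variable (hδ : 0 < δ) (hab : 2 * (m + 1) * δ ≤ b - a) (hg : ContDiffOn ℝ m g (Icc a b))
  (hw : ∀ k ≤ m, ∑ i, w i * reflectionNodes m i ^ k = 1)
include hδ hab hg hw

theorem iteratedDerivWithin_higherReflection_left {k : ℕ} (hk : k ≤ m) :
    iteratedDerivWithin k (higherReflection w (reflectionNodes m) a g) (Icc (a - 2 * δ) a) a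
      = iteratedDerivWithin k g (Icc a b) a :=
  iteratedDerivWithin_higherReflection_self (uniqueDiffOn_Icc (by linarith))
    (uniqueDiffOn_Icc (by nlinarith)) (hg.of_le (by exact_mod_cast hk))
    (mapsTo_reflectionNodes_left hδ hab) ⟨by linarith, le_rfl⟩ (hw k hk)

theorem iteratedDerivWithin_higherReflection_right {k : ℕ} (hk : k ≤ m) :
    iteratedDerivWithin k (higherReflection w (reflectionNodes m) b g) (Icc b (b + 2 * δ)) b
      = iteratedDerivWithin k g (Icc a b) b :=
  iteratedDerivWithin_higherReflection_self (uniqueDiffOn_Icc (by linarith))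
    (uniqueDiffOn_Icc (by nlinarith)) (hg.of_le (by exact_mod_cast hk))
    (mapsTo_reflectionNodes_right hδ hab) ⟨le_rfl, by linarith⟩ (hw k hk)

theorem extendByReflection_eqOn_left :
    EqOn (extendByReflection m w a b g) (higherReflection w (reflectionNodes m) a g)
      (Icc (a - 2 * δ) a) := fun x hx ↦ by
  rcases hx.2.lt_or_eq with h | rfl
  · simp [extendByReflection, h]
  · have hx : x ≤ b := by nlinarith
    simpa [extendByReflection, hx] using
      (iteratedDerivWithin_higherReflection_left hδ hab hg hw (Nat.zero_le m)).symm

theorem extendByReflection_eqOn_right :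
    EqOn (extendByReflection m w a b g) (higherReflection w (reflectionNodes m) b g)
      (Icc b (b + 2 * δ)) := fun x hx ↦ by
  have hab' : a < b := by nlinarith
  rcases hx.1.lt_or_eq with h | rfl
  · simp [extendByReflection, not_lt.2 (hab'.trans h).le, not_le.2 h]
  · simpa [extendByReflection, not_lt.2 hab'.le] using
      (iteratedDerivWithin_higherReflection_right hδ hab hg hw (Nat.zero_le m)).symm

theorem contDiffOn_extendByReflection :
    ContDiffOn ℝ m (extendByReflection m w a b g) (Icc (a - 2 * δ) (b + 2 * δ)) := by
  set F := extendByReflection m w a b g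
  have hab' : a < b := by nlinarith
  have hFL := extendByReflection_eqOn_left hδ hab hg hw
  have hFR := extendByReflection_eqOn_right hδ hab hg hw
  have hF₁ : ContDiffOn ℝ m F (Icc (a - 2 * δ) b) :=
    ((contDiffOn_higherReflection hg (mapsTo_reflectionNodes_left hδ hab)).congr hFL).Icc_union_Icc
      (by linarith) hab' (hg.congr extendByReflection_eqOn) fun k hk ↦ by
        rw [iteratedDerivWithin_congr hFL ⟨by linarith, le_rfl⟩,
          iteratedDerivWithin_higherReflection_left hδ hab hg hw hk,
          iteratedDerivWithin_congr extendByReflection_eqOn ⟨le_rfl, hab'.le⟩]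
  have hnear : Icc (a - 2 * δ) b =ᶠ[𝓝 b] Icc a b := by
    filter_upwards [Ioi_mem_nhds hab'] with x hx
    exact propext ⟨fun h ↦ ⟨le_of_lt hx, h.2⟩, fun h ↦ ⟨by linarith [h.1], h.2⟩⟩
  refine hF₁.Icc_union_Icc (by linarith) (by linarith)
    ((contDiffOn_higherReflection hg (mapsTo_reflectionNodes_right hδ hab)).congr hFR)
      fun k hk ↦ ?_
  rw [iteratedDerivWithin_congr_set hnear,
    iteratedDerivWithin_congr extendByReflection_eqOn ⟨hab'.le, le_rfl⟩,
    ← iteratedDerivWithin_higherReflection_right hδ hab hg hw hk,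
    iteratedDerivWithin_congr hFR ⟨le_rfl, by linarith⟩]

end Glue

theorem extendIcc_eqOn (hδ : 0 < δ) : EqOn (extendIcc m w δ a b g) g (Icc a b) := fun x hx ↦ by
  have h₁ : cutoff δ⁻¹ a x = 1 := cutoff_eq_one (by have := hx.1; positivity)
  have h₂ : cutoff (-δ⁻¹) b x = 1 := cutoff_eq_one (by nlinarith [hx.2, inv_pos.2 hδ])
  simp [extendIcc, h₁, h₂, extendByReflection_eqOn hx]

theorem support_extendIcc_subset (hδ : 0 < δ) :
    support (extendIcc m w δ a b g) ⊆ Icc (a - δ) (b + δ) := fun x hx ↦ by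
  by_contra hx'
  rcases not_and_or.1 hx' with h | h
  · have : cutoff δ⁻¹ a x = 0 := cutoff_eq_zero (by rw [inv_mul_le_iff₀ hδ]; linarith)
    simp [extendIcc, this] at hx
  · have : cutoff (-δ⁻¹) b x = 0 := cutoff_eq_zero (by
      rw [neg_mul, neg_le_neg_iff, le_inv_mul_iff₀ hδ]; linarith)
    simp [extendIcc, this] at hx

theorem support_iteratedDeriv_extendIcc_subset (hδ : 0 < δ) (k : ℕ) :
    support (iteratedDeriv k (extendIcc m w δ a b g))
      ⊆ Ioo (a - 2 * δ) a ∪ Icc a b ∪ Ioo b (b + 2 * δ) := by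
  refine (support_iteratedDeriv_subset k _).trans
    ((closure_minimal (support_extendIcc_subset hδ) isClosed_Icc).trans fun x hx ↦ ?_)
  by_cases hxa : x < a
  · exact Or.inl (Or.inl ⟨by linarith [hx.1], hxa⟩)
  by_cases hxb : x ≤ b
  · exact Or.inl (Or.inr ⟨not_lt.1 hxa, hxb⟩)
  · exact Or.inr ⟨not_le.1 hxb, by linarith [hx.2]⟩

theorem contDiff_extendIcc (hδ : 0 < δ) (hab : 2 * (m + 1) * δ ≤ b - a)
    (hg : ContDiffOn ℝ m g (Icc a b)) (hw : ∀ k ≤ m, ∑ i, w i * reflectionNodes m i ^ k = 1) :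
    ContDiff ℝ m (extendIcc m w δ a b g) :=
  contDiff_of_contDiffOn_of_support_subset (U := Ioo (a - 2 * δ) (b + 2 * δ)) isOpen_Ioo
    isClosed_Icc (Icc_subset_Ioo (by linarith) (by linarith))
    (((contDiff_cutoff _ _).mul (contDiff_cutoff _ _)).contDiffOn.mul
      ((contDiffOn_extendByReflection hδ hab hg hw).mono Ioo_subset_Icc_self))
    (support_extendIcc_subset hδ)

theorem extendIcc_eqOn_Iio (hδ : 0 < δ) (hab : a ≤ b) :
    EqOn (extendIcc m w δ a b g) (cutoff δ⁻¹ a * higherReflection w (reflectionNodes m) a g)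
      (Iio a) := fun x hx ↦ by
  have : cutoff (-δ⁻¹) b x = 1 := cutoff_eq_one (by
    have : x ≤ b := (le_of_lt hx).trans hab
    nlinarith [inv_pos.2 hδ])
  simp [extendIcc, extendByReflection, this, show x < a from hx]

theorem extendIcc_eqOn_Ioi (hδ : 0 < δ) (hab : a ≤ b) :
    EqOn (extendIcc m w δ a b g) (cutoff (-δ⁻¹) b * higherReflection w (reflectionNodes m) b g)
      (Ioi b) := fun x hx ↦ by
  have hx' : b < x := hx
  have : cutoff δ⁻¹ a x = 1 := cutoff_eq_one (by
    have : a ≤ x := hab.trans hx'.le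
    have := inv_pos.2 hδ
    nlinarith)
  simp [extendIcc, extendByReflection, this, not_lt.2 (hab.trans hx'.le), not_le.2 hx']

section Flaps

variable {k : ℕ} {M B : ℝ} (hδ : 0 < δ) (hab : 2 * (m + 1) * δ ≤ b - a)
  (hg : ContDiffOn ℝ k g (Icc a b))
  (hM : ∀ j ≤ k, ∀ y, ‖iteratedDeriv j Real.smoothTransition y‖ ≤ M)
  (hB : ∀ i, ∀ j ≤ k, ‖w i * reflectionNodes m i ^ j‖ ≤ B)
include hδ hab hg hM hB

theorem eLpNorm_iteratedDeriv_extendIcc_Ioo_left_le :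
    eLpNorm (iteratedDeriv k (extendIcc m w δ a b g)) 2 (volume.restrict (Ioo (a - 2 * δ) a))
      ≤ ENNReal.ofReal (2 ^ k * ((1 + δ⁻¹) ^ k * M) * B) * (m + 1) *
        ∑ j ∈ Finset.range (k + 1), eLpNorm (iteratedDeriv j g) 2 (volume.restrict (Icc a b)) := by
  rw [eLpNorm_iteratedDeriv_restrict_congr isOpen_Ioo
    ((extendIcc_eqOn_Iio hδ (by nlinarith)).mono Ioo_subset_Iio_self)]
  have := eLpNorm_iteratedDeriv_cutoff_mul_higherReflection_le (σ := δ⁻¹) (by nlinarith) hg hM hB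
    isOpen_Ioo fun i ↦ (mapsTo_reflectionNodes_left hδ hab i).mono_left Ioo_subset_Icc_self
  rwa [abs_of_pos (inv_pos.2 hδ)] at this

theorem eLpNorm_iteratedDeriv_extendIcc_Ioo_right_le :
    eLpNorm (iteratedDeriv k (extendIcc m w δ a b g)) 2 (volume.restrict (Ioo b (b + 2 * δ)))
      ≤ ENNReal.ofReal (2 ^ k * ((1 + δ⁻¹) ^ k * M) * B) * (m + 1) *
        ∑ j ∈ Finset.range (k + 1), eLpNorm (iteratedDeriv j g) 2 (volume.restrict (Icc a b)) := by
  rw [eLpNorm_iteratedDeriv_restrict_congr isOpen_Ioo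
    ((extendIcc_eqOn_Ioi hδ (by nlinarith)).mono Ioo_subset_Ioi_self)]
  have := eLpNorm_iteratedDeriv_cutoff_mul_higherReflection_le (σ := -δ⁻¹) (by nlinarith) hg hM hB
    isOpen_Ioo fun i ↦ (mapsTo_reflectionNodes_right hδ hab i).mono_left Ioo_subset_Icc_self
  rwa [abs_neg, abs_of_pos (inv_pos.2 hδ)] at this

theorem eLpNorm_iteratedDeriv_extendIcc_sq_le :
    eLpNorm (iteratedDeriv k (extendIcc m w δ a b g)) 2 volume ^ 2 ≤
      (2 * (ENNReal.ofReal (2 ^ k * ((1 + δ⁻¹) ^ k * M) * B) * (m + 1)) ^ 2 * (k + 1) + 1) *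
        sobolevSq k (volume.restrict (Icc a b)) g := by
  set E := extendIcc m w δ a b g
  set K := ENNReal.ofReal (2 ^ k * ((1 + δ⁻¹) ^ k * M) * B) * (m + 1)
  set N : ℕ → ℝ≥0∞ := fun j ↦ eLpNorm (iteratedDeriv j g) 2 (volume.restrict (Icc a b))
  set S := sobolevSq k (volume.restrict (Icc a b)) g
  have hX : (∑ j ∈ Finset.range (k + 1), N j) ^ 2 ≤ (k + 1) * S := by
    simpa [S, sobolevSq, N] using ENNReal.sq_sum_le_card_mul_sum_sq (Finset.range (k + 1)) N
  have hNk : N k ^ 2 ≤ S :=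
    Finset.single_le_sum (f := fun j ↦ N j ^ 2) (fun _ _ ↦ zero_le) (Finset.self_mem_range_succ k)
  calc eLpNorm (iteratedDeriv k E) 2 volume ^ 2
      = eLpNorm (iteratedDeriv k E) 2
          (volume.restrict (Ioo (a - 2 * δ) a ∪ Icc a b ∪ Ioo b (b + 2 * δ))) ^ 2 := by
        rw [eLpNorm_restrict_eq_of_support_subset (support_iteratedDeriv_extendIcc_subset hδ k)]
    _ ≤ eLpNorm (iteratedDeriv k E) 2 (volume.restrict (Ioo (a - 2 * δ) a)) ^ 2
          + eLpNorm (iteratedDeriv k E) 2 (volume.restrict (Icc a b)) ^ 2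
          + eLpNorm (iteratedDeriv k E) 2 (volume.restrict (Ioo b (b + 2 * δ))) ^ 2 :=
        (eLpNorm_two_sq_restrict_union_le _ _ _).trans
          (add_le_add_left (eLpNorm_two_sq_restrict_union_le _ _ _) _)
    _ ≤ (K * ∑ j ∈ Finset.range (k + 1), N j) ^ 2 + N k ^ 2
          + (K * ∑ j ∈ Finset.range (k + 1), N j) ^ 2 := by
        rw [eLpNorm_iteratedDeriv_restrict_Icc_congr (extendIcc_eqOn hδ)]
        gcongr
        exacts [eLpNorm_iteratedDeriv_extendIcc_Ioo_left_le hδ hab hg hM hB,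
          eLpNorm_iteratedDeriv_extendIcc_Ioo_right_le hδ hab hg hM hB]
    _ = 2 * K ^ 2 * (∑ j ∈ Finset.range (k + 1), N j) ^ 2 + N k ^ 2 := by ring
    _ ≤ 2 * K ^ 2 * ((k + 1) * S) + S := by gcongr
    _ = (2 * K ^ 2 * (k + 1) + 1) * S := by ring

end Flaps

end ExtendIcc

theorem exists_extension_Icc {c : ℝ} (hc : 0 < c) (m : ℕ) :
    ∃ C : ℝ≥0, ∀ a b : ℝ, a + c ≤ b → ∀ g : ℝ → ℝ, ContDiffOn ℝ m g (Icc a b) →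
      ∃ E : ℝ → ℝ, ContDiff ℝ m E ∧ EqOn E g (Icc a b) ∧
        support E ⊆ Icc (a - c / 3) (b + c / 3) ∧ ∀ k ≤ m, eLpNorm (iteratedDeriv k E) 2 volume ^ 2
          ≤ C * sobolevSq k (volume.restrict (Icc a b)) g := by
  obtain ⟨w, hw⟩ := exists_sum_mul_pow_eq_one (reflectionNodes_injective m)
  obtain ⟨B, hB⟩ : ∃ B, ∀ i, ∀ j ≤ m, ‖w i * reflectionNodes m i ^ j‖ ≤ B := by
    obtain ⟨B, hB⟩ := (Set.finite_range fun p : Fin (m + 1) × Fin (m + 1) ↦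
      ‖w p.1 * reflectionNodes m p.1 ^ (p.2 : ℕ)‖).bddAbove
    exact ⟨B, fun i j hj ↦ hB ⟨(i, ⟨j, Nat.lt_succ_of_le hj⟩), rfl⟩⟩
  obtain ⟨M, hM⟩ : ∃ M, ∀ j ≤ m, ∀ y, ‖iteratedDeriv j Real.smoothTransition y‖ ≤ M := by
    choose M hM using Real.smoothTransition.exists_bound_iteratedDeriv
    obtain ⟨M', hM'⟩ := (Set.finite_range fun j : Fin (m + 1) ↦ M j).bddAbove
    exact ⟨M', fun j hj y ↦ (hM j y).trans (hM' ⟨⟨j, Nat.lt_succ_of_le hj⟩, rfl⟩)⟩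
  -- flaps of width `2 δ` are dilated by ratios `≤ m + 1` into `[a, b]`, which has length `≥ c`
  set δ := c / (4 * (m + 1))
  have hδ : 0 < δ := by positivity
  have hδc : 4 * (m + 1) * δ = c := by simp only [δ]; field_simp
  set C : ℕ → ℝ≥0∞ := fun k ↦
    2 * (ENNReal.ofReal (2 ^ k * ((1 + δ⁻¹) ^ k * M) * B) * (m + 1)) ^ 2 * (k + 1) + 1
  have hC : ∑ k ∈ Finset.range (m + 1), C k ≠ ⊤ := by
    simp [C, ENNReal.mul_eq_top]
  refine ⟨(∑ k ∈ Finset.range (m + 1), C k).toNNReal, fun a b hab g hg ↦ ?_⟩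
  have hab' : 2 * (m + 1) * δ ≤ b - a := by nlinarith
  have hδ₃ : δ ≤ c / 3 := by nlinarith
  refine ⟨extendIcc m w δ a b g, contDiff_extendIcc hδ hab' hg hw, extendIcc_eqOn hδ,
    (support_extendIcc_subset hδ).trans (Icc_subset_Icc (by linarith) (by linarith)),
    fun k hk ↦ (eLpNorm_iteratedDeriv_extendIcc_sq_le hδ hab' (hg.of_le (by exact_mod_cast hk))
      (fun j hj ↦ hM j (hj.trans hk)) fun i j hj ↦ hB i j (hj.trans hk)).trans ?_⟩
  rw [ENNReal.coe_toNNReal hC]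
  gcongr
  exact Finset.single_le_sum (f := C) (fun _ _ ↦ zero_le) (Finset.mem_range_succ_iff.2 hk)

theorem add_le_of_lt_of_gaps {c : ℝ} (hc : 0 ≤ c) {n : ℕ} {a b : Fin (n + 1) → ℝ}
    (hlen : ∀ l, a l + c ≤ b l) (hgap : ∀ l : Fin n, b l.castSucc + c ≤ a l.succ)
    {l l' : Fin (n + 1)} (hll' : l < l') : b l + c ≤ a l' := by
  have hb : Monotone b := Fin.monotone_iff_le_succ.2 fun i ↦ by linarith [hgap i, hlen i.succ]
  obtain ⟨i, rfl⟩ := Fin.exists_succ_eq.2 (Fin.ne_zero_of_lt hll')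
  linarith [hb (Fin.le_castSucc_iff.2 hll'), hgap i]

theorem pairwise_disjoint_Icc_sub_add {c : ℝ} (hc : 0 < c) {n : ℕ} {a b : Fin (n + 1) → ℝ}
    (hlen : ∀ l, a l + c ≤ b l) (hgap : ∀ l : Fin n, b l.castSucc + c ≤ a l.succ) :
    Pairwise (Disjoint on fun l ↦ Icc (a l - c / 3) (b l + c / 3)) := by
  intro l l' hne
  wlog h : l < l' generalizing l l'
  · exact (this hne.symm (lt_of_le_of_ne (not_lt.1 h) hne.symm)).symm
  exact Set.disjoint_left.2 fun x hx hx' ↦ by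
    linarith [add_le_of_lt_of_gaps hc.le hlen hgap h, hx.2, hx'.1]

theorem CRegular1D.exists_extension {c : ℝ} (hc : 0 < c) (m : ℕ) :
    ∃ C : ℝ≥0, ∀ s g, CRegular1D c s → ContDiffOn ℝ m g s →
      ∃ ge : ℝ → ℝ, ContDiff ℝ m ge ∧ EqOn ge g s ∧ ∀ k ≤ m,
        eLpNorm (iteratedDeriv k ge) 2 volume ^ 2 ≤ C * sobolevSq k (volume.restrict s) g := by
  obtain ⟨C, hC⟩ := exists_extension_Icc hc m
  refine ⟨C, ?_⟩
  rintro s g ⟨n, a, b, hlen, hgap, rfl⟩ hg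
  have hdisj := pairwise_disjoint_Icc_sub_add hc hlen hgap
  have hsub : ∀ l, Icc (a l) (b l) ⊆ Icc (a l - c / 3) (b l + c / 3) := fun l ↦
    Icc_subset_Icc (by linarith) (by linarith)
  choose E hE hEg hEsupp hEL2 using fun l ↦
    hC (a l) (b l) (hlen l) g (hg.mono (subset_iUnion (fun l ↦ Icc (a l) (b l)) l))
  refine ⟨fun x ↦ ∑ l, E l x, ContDiff.sum fun l _ ↦ hE l, fun x hx ↦ ?_, fun k hk ↦ ?_⟩
  · obtain ⟨l, hl⟩ := mem_iUnion.1 hx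
    rw [← hEg l hl]
    exact Finset.sum_eq_single l (fun l' _ hl' ↦ notMem_support.1 fun h ↦
      Set.disjoint_left.1 (hdisj hl') (hEsupp l' h) (hsub l hl)) (by simp)
  have hk' : (k : WithTop ℕ∞) ≤ m := by exact_mod_cast hk
  have hsupp : ∀ l, support (iteratedDeriv k (E l)) ⊆ Icc (a l - c / 3) (b l + c / 3) := fun l ↦
    (support_iteratedDeriv_subset k _).trans (closure_minimal (hEsupp l) isClosed_Icc)
  have hderiv : iteratedDeriv k (fun x ↦ ∑ l, E l x) = ∑ l, iteratedDeriv k (E l) :=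
    funext fun x ↦ by
      rw [iteratedDeriv_fun_sum fun l _ ↦ ((hE l).of_le hk').contDiffAt, Finset.sum_apply]
  rw [hderiv, eLpNorm_two_sq_sum_of_pairwise_disjoint_support
      (fun l ↦ ((hE l).continuous_iteratedDeriv k hk').aestronglyMeasurable)
      fun l l' hll' ↦ (hdisj hll').mono (hsupp l) (hsupp l'),
    sobolevSq_restrict_iUnion (fun l ↦ measurableSet_Icc)
      (fun l l' hll' ↦ (hdisj hll').mono (hsub l) (hsub l')), Finset.mul_sum]
  exact Finset.sum_le_sum fun l _ ↦ hEL2 l k hk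

theorem sobolev_extension_cregular_general (c : ℝ) (hc : 0 < c) (m : ℕ) :
    ∃ c₃ c₄ : ℝ≥0∞, 0 < c₃ ∧ c₃ < ⊤ ∧ 0 < c₄ ∧ c₄ < ⊤ ∧
      ∀ (s : Set ℝ) (g : ℝ → ℝ), CRegular1D c s → ContDiffOn ℝ m g s →
        HmN m s g < ⊤ →
        ∃ ge : ℝ → ℝ, ContDiff ℝ m ge ∧ Set.EqOn ge g s ∧
          eLpNorm ge 2 volume ≤ c₃ * eLpNorm g 2 (volume.restrict s) ∧
          HmN m Set.univ ge ≤ c₄ * HmN m s g := by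
  obtain ⟨C, hC⟩ := CRegular1D.exists_extension hc m
  set C' : ℝ≥0∞ := C + 1
  have hC' : C' ≠ ⊤ := by simp [C']
  have hmC' : (m + 1) * C' ≠ ⊤ := by simp [C', ENNReal.mul_eq_top]
  refine ⟨C' ^ (1 / 2 : ℝ), ((m + 1) * C') ^ (1 / 2 : ℝ),
    ENNReal.rpow_pos (by positivity) hC', ENNReal.rpow_lt_top_of_nonneg (by norm_num) hC',
    ENNReal.rpow_pos (by positivity) hmC', ENNReal.rpow_lt_top_of_nonneg (by norm_num) hmC',
    fun s g hs hg _ ↦ ?_⟩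
  obtain ⟨ge, hge, hgeg, hbound⟩ := hC s g hs hg
  have hbound' : ∀ k ≤ m, eLpNorm (iteratedDeriv k ge) 2 volume ^ 2
      ≤ C' * sobolevSq k (volume.restrict s) g := fun k hk ↦
    (hbound k hk).trans (by gcongr; exact le_self_add)
  refine ⟨ge, hge, hgeg, ENNReal.le_rpow_half_mul_of_sq_le ?_,
    ENNReal.le_rpow_half_mul_of_sq_le ?_⟩
  · simpa [sobolevSq] using hbound' 0 (Nat.zero_le m)
  · rw [HmN_sq, HmN_sq, Measure.restrict_univ]
    exact sobolevSq_le_mul_of_forall_le hbound'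

/-- Sobolev extension on `c`-regular one-dimensional sets: there are constants
`c₃, c₄ > 0` depending only on `c` and `m` such that every `m`-times
continuously differentiable `g` with finite `H^m` norm on a `c`-regular set `s`
admits an extension `gᵉ` to all of `ℝ` agreeing with `g` on `s` and satisfying
`‖gᵉ‖_{L²(ℝ)} ≤ c₃ ‖g‖_{L²(s)}` and `‖gᵉ‖_{H^m(ℝ)} ≤ c₄ ‖g‖_{H^m(s)}`. -/
theorem sobolev_extension_cregular (c : ℝ) (hc : 0 < c) (m : ℕ) (hm : 1 ≤ m) :
    ∃ c₃ c₄ : ℝ≥0∞, 0 < c₃ ∧ c₃ < ⊤ ∧ 0 < c₄ ∧ c₄ < ⊤ ∧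
      ∀ (s : Set ℝ) (g : ℝ → ℝ), CRegular1D c s → ContDiffOn ℝ m g s →
        HmN m s g < ⊤ →
        ∃ ge : ℝ → ℝ, ContDiff ℝ m ge ∧ Set.EqOn ge g s ∧
          eLpNorm ge 2 volume ≤ c₃ * eLpNorm g 2 (volume.restrict s) ∧
          HmN m Set.univ ge ≤ c₄ * HmN m s g :=
  sobolev_extension_cregular_general c hc m
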